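/- Let U = k1 · A(c1,c2,c3) · k2 where k1, k2 are local gates and c1,c2,c3 ∈ ℝ, and let m = m(U). Then tr(m) = 4 cos c1 cos c2 cos c3 + 4i sin c1 sin c2 sin c3, and tr(m)² − tr(m²) = 16 cos²c1 cos²c2 cos²c3 − 16 sin²c1 sin²c2 sin²c3 − 4 cos 2c1 cos 2c2 cos 2c3. -/

import Mathlib

open Matrix Complex

noncomputable section

/-- Pauli matrix σx. -/
def sigmaX : Matrix (Fin 2) (Fin 2) ℂ := !![0, 1; 1, 0]
/-- Pauli matrix σy. -/
def sigmaY : Matrix (Fin 2) (Fin 2) ℂ := !![0, -I; I, 0]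
/-- Pauli matrix σz. -/
def sigmaZ : Matrix (Fin 2) (Fin 2) ℂ := !![1, 0; 0, -1]

/-- Kronecker product of two 2×2 complex matrices, as a 4×4 matrix
(row-major ordering: entry ((2i+k),(2j+l)) is `A i j * B k l`). -/
def kron (A B : Matrix (Fin 2) (Fin 2) ℂ) : Matrix (Fin 4) (Fin 4) ℂ :=
  Matrix.of fun i j =>
    A ⟨i.val / 2, by have := i.isLt; omega⟩ ⟨j.val / 2, by have := j.isLt; omega⟩ *
    B ⟨i.val % 2, by have := i.isLt; omega⟩ ⟨j.val % 2, by have := j.isLt; omega⟩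

/-- Membership in SU(2): 2×2 unitary with determinant 1. -/
def InSU2 (k : Matrix (Fin 2) (Fin 2) ℂ) : Prop := kᴴ * k = 1 ∧ k.det = 1

/-- The gate A(c1,c2,c3) = exp((i/2)(c1 σx⊗σx + c2 σy⊗σy + c3 σz⊗σz)). -/
def Agate (c1 c2 c3 : ℝ) : Matrix (Fin 4) (Fin 4) ℂ :=
  NormedSpace.exp ((I / 2) •
    ((c1 : ℂ) • kron sigmaX sigmaX + (c2 : ℂ) • kron sigmaY sigmaY +
      (c3 : ℂ) • kron sigmaZ sigmaZ))

/-- The transformation from the computational basis to the Bell basis. -/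
def Qmat : Matrix (Fin 4) (Fin 4) ℂ :=
  (((Real.sqrt 2 : ℝ) : ℂ))⁻¹ • !![1, 0, 0, I; 0, I, 1, 0; 0, I, -1, 0; 1, 0, 0, -I]

/-- m(U) = (Q†UQ)ᵀ(Q†UQ). -/
def mU (U : Matrix (Fin 4) (Fin 4) ℂ) : Matrix (Fin 4) (Fin 4) ℂ :=
  (Qmatᴴ * U * Qmat)ᵀ * (Qmatᴴ * U * Qmat)

/-! ### Auxiliary lemmas -/

lemma kron_eq (A B : Matrix (Fin 2) (Fin 2) ℂ) :
    kron A B = !![A 0 0*B 0 0, A 0 0*B 0 1, A 0 1*B 0 0, A 0 1*B 0 1;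
                  A 0 0*B 1 0, A 0 0*B 1 1, A 0 1*B 1 0, A 0 1*B 1 1;
                  A 1 0*B 0 0, A 1 0*B 0 1, A 1 1*B 0 0, A 1 1*B 0 1;
                  A 1 0*B 1 0, A 1 0*B 1 1, A 1 1*B 1 0, A 1 1*B 1 1] := by
  ext i j
  fin_cases i <;> fin_cases j <;> rfl

lemma kron_mul (A B C D : Matrix (Fin 2) (Fin 2) ℂ) :
    kron A B * kron C D = kron (A * C) (B * D) := by
  simp only [kron_eq, Matrix.mul_apply, Fin.sum_univ_two]
  ext i j
  fin_cases i <;> fin_cases j <;>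
    simp [Matrix.mul_apply, Fin.sum_univ_four] <;> ring

lemma kron_transpose (A B : Matrix (Fin 2) (Fin 2) ℂ) :
    (kron A B)ᵀ = kron Aᵀ Bᵀ := by
  simp only [kron_eq]
  ext i j
  fin_cases i <;> fin_cases j <;> simp

lemma symp2 (a b c d : ℂ) (h : a * d - b * c = 1) :
    (!![a, b; c, d])ᵀ * sigmaY * !![a, b; c, d] = sigmaY := by
  rw [show (!![a, b; c, d])ᵀ = !![a, c; b, d] by
    ext i j; fin_cases i <;> fin_cases j <;> rfl]
  ext i j
  fin_cases i <;> fin_cases j <;>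
    · simp [sigmaY, Matrix.mul_apply, Fin.sum_univ_two, Matrix.transpose_apply]
      first
      | ring1
      | linear_combination I * h
      | linear_combination (-I) * h

lemma symp (k : Matrix (Fin 2) (Fin 2) ℂ) (hk : k.det = 1) :
    kᵀ * sigmaY * k = sigmaY := by
  rw [Matrix.det_fin_two] at hk
  rw [Matrix.eta_fin_two k]
  exact symp2 _ _ _ _ hk

lemma s_sq : (((Real.sqrt 2 : ℝ) : ℂ))⁻¹ * (((Real.sqrt 2 : ℝ) : ℂ))⁻¹ = 2⁻¹ := by
  rw [← mul_inv]
  norm_cast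
  rw [Real.mul_self_sqrt (by norm_num)]
  norm_num

lemma Q_unitary : Qmatᴴ * Qmat = 1 := by
  ext i j
  fin_cases i <;> fin_cases j <;>
    (simp [Qmat, Matrix.mul_apply, Fin.sum_univ_four, Matrix.conjTranspose_apply,
        map_inv₀, Complex.conj_ofReal] <;>
     first
      | rfl
      | linear_combination (2 : ℂ) * s_sq
      | linear_combination (-2 * (((Real.sqrt 2:ℝ):ℂ))⁻¹ * (((Real.sqrt 2:ℝ):ℂ))⁻¹) *
          Complex.I_mul_I + 2 * s_sq)

lemma Q_unitary' : Qmat * Qmatᴴ = 1 :=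
  mul_eq_one_comm.mp Q_unitary

/-- conj(Q) * Qᴴ = -(σy⊗σy). -/
lemma QconjQH : (Qmatᴴ)ᵀ * Qmatᴴ = -(kron sigmaY sigmaY) := by
  ext i j
  fin_cases i <;> fin_cases j <;>
    (simp [Qmat, kron_eq, sigmaY, Matrix.mul_apply, Fin.sum_univ_four,
        Matrix.conjTranspose_apply, Matrix.transpose_apply, map_inv₀,
        Matrix.vecHead, Matrix.vecTail, Matrix.neg_apply,
        Complex.conj_ofReal] <;>
     first
      | rfl
      | linear_combination (2 : ℂ) * s_sq
      | linear_combination (-2 : ℂ) * s_sq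
      | linear_combination ((2 : ℂ) * I) * s_sq
      | linear_combination ((-2 : ℂ) * I) * s_sq
      | linear_combination ((5:ℂ) + I^2*3) * s_sq + ((3:ℂ)/2) * Complex.I_sq
      | linear_combination ((5:ℂ) + I^2*1) * s_sq + ((1:ℂ)/2) * Complex.I_sq
      | linear_combination ((3:ℂ) + I^2*3) * s_sq + ((3:ℂ)/2) * Complex.I_sq
      | linear_combination (-(5:ℂ) - I^2*3) * s_sq - ((3:ℂ)/2) * Complex.I_sq
      | linear_combination (-(5:ℂ) - I^2*1) * s_sq - ((1:ℂ)/2) * Complex.I_sq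
      | linear_combination (-(3:ℂ) - I^2*3) * s_sq - ((3:ℂ)/2) * Complex.I_sq
      | linear_combination ((4:ℂ) + I^2*4) * s_sq + ((4:ℂ)/2) * Complex.I_sq
      | linear_combination ((4:ℂ) + I^2*2) * s_sq + ((2:ℂ)/2) * Complex.I_sq
      | linear_combination ((2:ℂ) + I^2*4) * s_sq + ((4:ℂ)/2) * Complex.I_sq
      | linear_combination (-(4:ℂ) - I^2*4) * s_sq - ((4:ℂ)/2) * Complex.I_sq
      | linear_combination (-(4:ℂ) - I^2*2) * s_sq - ((2:ℂ)/2) * Complex.I_sq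
      | linear_combination (-(2:ℂ) - I^2*4) * s_sq - ((4:ℂ)/2) * Complex.I_sq
      | linear_combination ((1:ℂ) + I^2*1) * s_sq + ((1:ℂ)/2) * Complex.I_sq
      | linear_combination ((1:ℂ) - I^2*1) * s_sq - ((1:ℂ)/2) * Complex.I_sq
      | linear_combination (-(1:ℂ) + I^2*1) * s_sq + ((1:ℂ)/2) * Complex.I_sq
      | linear_combination (-(1:ℂ) - I^2*1) * s_sq - ((1:ℂ)/2) * Complex.I_sq)

/-- Orthogonality of the image of a local gate in the magic basis. -/
lemma ortho (k1 k2 : Matrix (Fin 2) (Fin 2) ℂ) (hd1 : k1.det = 1) (hd2 : k2.det = 1) :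
    (Qmatᴴ * kron k1 k2 * Qmat)ᵀ * (Qmatᴴ * kron k1 k2 * Qmat) = 1 := by
  have hQt : Qmatᵀ * (Qmatᴴ)ᵀ = 1 := by
    rw [← Matrix.transpose_mul, Q_unitary, Matrix.transpose_one]
  have key : (kron k1 k2)ᵀ * kron sigmaY sigmaY * kron k1 k2 = kron sigmaY sigmaY := by
    rw [kron_transpose, kron_mul, kron_mul, symp k1 hd1, symp k2 hd2]
  calc (Qmatᴴ * kron k1 k2 * Qmat)ᵀ * (Qmatᴴ * kron k1 k2 * Qmat)
      = Qmatᵀ * ((kron k1 k2)ᵀ * (((Qmatᴴ)ᵀ * Qmatᴴ) * kron k1 k2)) * Qmat := by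
        simp only [Matrix.transpose_mul, Matrix.mul_assoc]
    _ = Qmatᵀ * (-((kron k1 k2)ᵀ * kron sigmaY sigmaY * kron k1 k2)) * Qmat := by
        rw [QconjQH]; simp only [Matrix.neg_mul, Matrix.mul_neg, Matrix.mul_assoc]
    _ = Qmatᵀ * ((Qmatᴴ)ᵀ * Qmatᴴ) * Qmat := by rw [key, ← QconjQH]
    _ = (Qmatᵀ * (Qmatᴴ)ᵀ) * (Qmatᴴ * Qmat) := by
        simp only [Matrix.mul_assoc]
    _ = 1 := by rw [hQt, Q_unitary, Matrix.one_mul]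

/-- The diagonal entries of A in the magic basis (half-angle version). -/
def dvec (c1 c2 c3 : ℝ) : Fin 4 → ℂ :=
  ![I/2*(c1-c2+c3), I/2*(c1+c2-c3), I/2*(-c1-c2-c3), I/2*(-c1+c2+c3)]

lemma diag4 (v : Fin 4 → ℂ) : diagonal v =
    !![v 0,0,0,0; 0,v 1,0,0; 0,0,v 2,0; 0,0,0,v 3] := by
  ext i j
  fin_cases i <;> fin_cases j <;> rfl

set_option maxHeartbeats 1000000 in
lemma hdiag (c1 c2 c3 : ℝ) :
    ((I / 2) • ((c1 : ℂ) • kron sigmaX sigmaX + (c2 : ℂ) • kron sigmaY sigmaY +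
      (c3 : ℂ) • kron sigmaZ sigmaZ)) * Qmat = Qmat * diagonal (dvec c1 c2 c3) := by
  ext i j
  fin_cases i <;> fin_cases j <;>
    (simp [Qmat, kron_eq, sigmaX, sigmaY, sigmaZ, dvec, diag4, Matrix.mul_apply,
        Matrix.vecHead, Matrix.vecTail,
        Fin.sum_univ_four, Matrix.smul_apply] <;> ring_nf)

lemma Agate_diag (c1 c2 c3 : ℝ) :
    Qmatᴴ * Agate c1 c2 c3 * Qmat = diagonal (fun k => Complex.exp (dvec c1 c2 c3 k)) := by
  have hQinv : Qmat⁻¹ = Qmatᴴ := Matrix.inv_eq_right_inv Q_unitary'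
  have hU : IsUnit Qmat := by
    refine (Matrix.isUnit_iff_isUnit_det _).mpr ?_
    exact Matrix.isUnit_det_of_right_inverse Q_unitary'
  have hN : ((I / 2) • ((c1 : ℂ) • kron sigmaX sigmaX + (c2 : ℂ) • kron sigmaY sigmaY +
      (c3 : ℂ) • kron sigmaZ sigmaZ)) = Qmat * diagonal (dvec c1 c2 c3) * Qmat⁻¹ := by
    rw [hQinv, ← hdiag, Matrix.mul_assoc, Q_unitary', Matrix.mul_one]
  rw [Agate, hN, Matrix.exp_conj _ _ hU, hQinv]
  rw [Matrix.exp_diagonal]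
  calc Qmatᴴ * (Qmat * diagonal (NormedSpace.exp (dvec c1 c2 c3)) * Qmatᴴ) * Qmat
      = (Qmatᴴ * Qmat) * diagonal (NormedSpace.exp (dvec c1 c2 c3)) * (Qmatᴴ * Qmat) := by
        simp only [Matrix.mul_assoc]
    _ = diagonal (NormedSpace.exp (dvec c1 c2 c3)) := by
        rw [Q_unitary, Matrix.one_mul, Matrix.mul_one]
    _ = diagonal (fun k => Complex.exp (dvec c1 c2 c3 k)) := by
        have hfe : NormedSpace.exp (dvec c1 c2 c3) =
            fun k => Complex.exp (dvec c1 c2 c3 k) :=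
          funext fun k => (Pi.coe_exp _ k).trans
            (congrFun Complex.exp_eq_exp_ℂ _).symm
        rw [hfe]

/-- Basic exponential/trig relations. -/
lemma trig (c : ℝ) :
    (Real.cos c : ℂ) = (Complex.exp ((c:ℂ)*I) + (Complex.exp ((c:ℂ)*I))⁻¹)/2 ∧
    I * (Real.sin c : ℂ) = (Complex.exp ((c:ℂ)*I) - (Complex.exp ((c:ℂ)*I))⁻¹)/2 := by
  have hx1 : Complex.exp ((c:ℂ)*I) = (Real.cos c : ℂ) + (Real.sin c : ℂ) * I := by
    rw [Complex.exp_mul_I, Complex.ofReal_cos, Complex.ofReal_sin]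
  have hpy : (Real.cos c : ℂ)^2 + (Real.sin c : ℂ)^2 = 1 := by
    norm_cast
    exact Real.cos_sq_add_sin_sq c
  have hx1' : (Complex.exp ((c:ℂ)*I))⁻¹ = (Real.cos c : ℂ) - (Real.sin c : ℂ) * I := by
    apply inv_eq_of_mul_eq_one_right
    rw [hx1]
    linear_combination hpy - (Real.sin c : ℂ)^2 * Complex.I_mul_I
  constructor
  · rw [hx1', hx1]; ring
  · rw [hx1', hx1]; ring

/-- For U = k1·A(c1,c2,c3)·k2 with k1, k2 local gates, the local invariants
tr m and tr²m − tr m² have the stated trigonometric expressions. -/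
theorem local_invariants_formula (a1 b1 a2 b2 : Matrix (Fin 2) (Fin 2) ℂ)
    (h1 : InSU2 a1) (h2 : InSU2 b1) (h3 : InSU2 a2) (h4 : InSU2 b2)
    (c1 c2 c3 : ℝ) :
    (mU (kron a1 b1 * Agate c1 c2 c3 * kron a2 b2)).trace =
      4 * (Real.cos c1 : ℂ) * (Real.cos c2 : ℂ) * (Real.cos c3 : ℂ) +
        4 * I * (Real.sin c1 : ℂ) * (Real.sin c2 : ℂ) * (Real.sin c3 : ℂ) ∧
    (mU (kron a1 b1 * Agate c1 c2 c3 * kron a2 b2)).trace ^ 2 -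
        (mU (kron a1 b1 * Agate c1 c2 c3 * kron a2 b2) *
          mU (kron a1 b1 * Agate c1 c2 c3 * kron a2 b2)).trace =
      16 * (Real.cos c1 : ℂ) ^ 2 * (Real.cos c2 : ℂ) ^ 2 * (Real.cos c3 : ℂ) ^ 2 -
        16 * (Real.sin c1 : ℂ) ^ 2 * (Real.sin c2 : ℂ) ^ 2 * (Real.sin c3 : ℂ) ^ 2 -
        4 * (Real.cos (2 * c1) : ℂ) * (Real.cos (2 * c2) : ℂ) * (Real.cos (2 * c3) : ℂ) := by
  have hcanc : ∀ Y : Matrix (Fin 4) (Fin 4) ℂ, Qmat * (Qmatᴴ * Y) = Y := fun Y => by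
    rw [← Matrix.mul_assoc, Q_unitary', Matrix.one_mul]
  set L1 := kron a1 b1 with hL1
  set L2 := kron a2 b2 with hL2
  set O1 := Qmatᴴ * L1 * Qmat with hO1def
  set O2 := Qmatᴴ * L2 * Qmat with hO2def
  set Dg := diagonal (fun k => Complex.exp (dvec c1 c2 c3 k)) with hDg
  have hO1 : O1ᵀ * O1 = 1 := by
    rw [hO1def, hL1]; exact ortho a1 b1 h1.2 h2.2
  have hO2 : O2ᵀ * O2 = 1 := by
    rw [hO2def, hL2]; exact ortho a2 b2 h3.2 h4.2
  have hO2' : O2 * O2ᵀ = 1 := mul_eq_one_comm.mp hO2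
  have hc1 : ∀ Y : Matrix (Fin 4) (Fin 4) ℂ, O1ᵀ * (O1 * Y) = Y := fun Y => by
    rw [← Matrix.mul_assoc, hO1, Matrix.one_mul]
  have hc2 : ∀ Y : Matrix (Fin 4) (Fin 4) ℂ, O2 * (O2ᵀ * Y) = Y := fun Y => by
    rw [← Matrix.mul_assoc, hO2', Matrix.one_mul]
  have hsplit : Qmatᴴ * (L1 * Agate c1 c2 c3 * L2) * Qmat = O1 * Dg * O2 := by
    rw [hDg, ← Agate_diag c1 c2 c3, hO1def, hO2def]
    simp only [Matrix.mul_assoc, hcanc]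
  have hm : mU (L1 * Agate c1 c2 c3 * L2) = O2ᵀ * (Dg * (Dg * O2)) := by
    rw [mU, hsplit]
    have hDgt : Dgᵀ = Dg := Matrix.diagonal_transpose _
    simp only [Matrix.transpose_mul, hDgt, Matrix.mul_assoc, hc1]
  have htr : (mU (L1 * Agate c1 c2 c3 * L2)).trace = (Dg * Dg).trace := by
    rw [hm, Matrix.trace_mul_comm]
    rw [show Dg * (Dg * O2) * O2ᵀ = Dg * Dg * (O2 * O2ᵀ) by
      simp only [Matrix.mul_assoc]]
    rw [hO2', Matrix.mul_one]
  have hmm : mU (L1 * Agate c1 c2 c3 * L2) * mU (L1 * Agate c1 c2 c3 * L2) =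
      O2ᵀ * (Dg * (Dg * (Dg * (Dg * O2)))) := by
    rw [hm]
    simp only [Matrix.mul_assoc, hc2]
  have htr2 : (mU (L1 * Agate c1 c2 c3 * L2) *
      mU (L1 * Agate c1 c2 c3 * L2)).trace = (Dg * (Dg * (Dg * Dg))).trace := by
    rw [hmm, Matrix.trace_mul_comm]
    rw [show Dg * (Dg * (Dg * (Dg * O2))) * O2ᵀ
        = Dg * (Dg * (Dg * (Dg * (O2 * O2ᵀ)))) by simp only [Matrix.mul_assoc]]
    rw [hO2', Matrix.mul_one]
  -- abbreviations for the exponentials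
  set x := Complex.exp ((c1 : ℂ) * I) with hxdef
  set y := Complex.exp ((c2 : ℂ) * I) with hydef
  set z := Complex.exp ((c3 : ℂ) * I) with hzdef
  have hxne : x ≠ 0 := Complex.exp_ne_zero _
  have hyne : y ≠ 0 := Complex.exp_ne_zero _
  have hzne : z ≠ 0 := Complex.exp_ne_zero _
  have hxi : x⁻¹ = Complex.exp (-((c1 : ℂ) * I)) := by rw [Complex.exp_neg]
  have hyi : y⁻¹ = Complex.exp (-((c2 : ℂ) * I)) := by rw [Complex.exp_neg]
  have hzi : z⁻¹ = Complex.exp (-((c3 : ℂ) * I)) := by rw [Complex.exp_neg]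
  -- the four diagonal exponential squares
  have e0 : Complex.exp (dvec c1 c2 c3 0) * Complex.exp (dvec c1 c2 c3 0)
      = x * y⁻¹ * z := by
    rw [hxdef, hyi, hzdef, ← Complex.exp_add, ← Complex.exp_add, ← Complex.exp_add]
    congr 1
    simp [dvec]
    ring
  have e1 : Complex.exp (dvec c1 c2 c3 1) * Complex.exp (dvec c1 c2 c3 1)
      = x * y * z⁻¹ := by
    rw [hxdef, hydef, hzi, ← Complex.exp_add, ← Complex.exp_add, ← Complex.exp_add]
    congr 1
    simp [dvec]
    ring
  have e2 : Complex.exp (dvec c1 c2 c3 2) * Complex.exp (dvec c1 c2 c3 2)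
      = x⁻¹ * y⁻¹ * z⁻¹ := by
    rw [hxi, hyi, hzi, ← Complex.exp_add, ← Complex.exp_add, ← Complex.exp_add]
    congr 1
    simp [dvec]
    ring
  have e3 : Complex.exp (dvec c1 c2 c3 3) * Complex.exp (dvec c1 c2 c3 3)
      = x⁻¹ * y * z := by
    rw [hxi, hydef, hzdef, ← Complex.exp_add, ← Complex.exp_add, ← Complex.exp_add]
    congr 1
    simp [dvec]
    ring
  have htrv : (Dg * Dg).trace = x*y⁻¹*z + x*y*z⁻¹ + x⁻¹*y⁻¹*z⁻¹ + x⁻¹*y*z := by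
    rw [hDg, Matrix.diagonal_mul_diagonal, Matrix.trace_diagonal, Fin.sum_univ_four]
    rw [e0, e1, e2, e3]
  have htrv2 : (Dg * (Dg * (Dg * Dg))).trace =
      (x*y⁻¹*z)^2 + (x*y*z⁻¹)^2 + (x⁻¹*y⁻¹*z⁻¹)^2 + (x⁻¹*y*z)^2 := by
    rw [hDg, Matrix.diagonal_mul_diagonal, Matrix.diagonal_mul_diagonal,
      Matrix.diagonal_mul_diagonal, Matrix.trace_diagonal, Fin.sum_univ_four]
    simp only [show ∀ a : ℂ, a * (a * (a * a)) = (a * a) ^ 2 from fun a => by ring]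
    rw [e0, e1, e2, e3]
  -- trig relations
  have hcos1 : (Real.cos c1 : ℂ) = (x + x⁻¹)/2 := (trig c1).1
  have hcos2 : (Real.cos c2 : ℂ) = (y + y⁻¹)/2 := (trig c2).1
  have hcos3 : (Real.cos c3 : ℂ) = (z + z⁻¹)/2 := (trig c3).1
  have gI1 : I * (Real.sin c1 : ℂ) = (x - x⁻¹)/2 := (trig c1).2
  have gI2 : I * (Real.sin c2 : ℂ) = (y - y⁻¹)/2 := (trig c2).2
  have gI3 : I * (Real.sin c3 : ℂ) = (z - z⁻¹)/2 := (trig c3).2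
  have hxx : Complex.exp (((2*c1 : ℝ) : ℂ) * I) = x^2 := by
    rw [sq, hxdef, ← Complex.exp_add]; congr 1; push_cast; ring
  have hyy : Complex.exp (((2*c2 : ℝ) : ℂ) * I) = y^2 := by
    rw [sq, hydef, ← Complex.exp_add]; congr 1; push_cast; ring
  have hzz : Complex.exp (((2*c3 : ℝ) : ℂ) * I) = z^2 := by
    rw [sq, hzdef, ← Complex.exp_add]; congr 1; push_cast; ring
  have h2c1 : (Real.cos (2*c1) : ℂ) = (x^2 + x⁻¹^2)/2 := by
    have := (trig (2*c1)).1; rw [hxx, ← inv_pow] at this; exact this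
  have h2c2 : (Real.cos (2*c2) : ℂ) = (y^2 + y⁻¹^2)/2 := by
    have := (trig (2*c2)).1; rw [hyy, ← inv_pow] at this; exact this
  have h2c3 : (Real.cos (2*c3) : ℂ) = (z^2 + z⁻¹^2)/2 := by
    have := (trig (2*c3)).1; rw [hzz, ← inv_pow] at this; exact this
  have hsq1 : (Real.sin c1 : ℂ)^2 = -(((x - x⁻¹)/2)^2) := by
    linear_combination (Real.sin c1 : ℂ)^2 * Complex.I_mul_I -
      (I * (Real.sin c1 : ℂ) + (x - x⁻¹)/2) * gI1
  have hsq2 : (Real.sin c2 : ℂ)^2 = -(((y - y⁻¹)/2)^2) := by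
    linear_combination (Real.sin c2 : ℂ)^2 * Complex.I_mul_I -
      (I * (Real.sin c2 : ℂ) + (y - y⁻¹)/2) * gI2
  have hsq3 : (Real.sin c3 : ℂ)^2 = -(((z - z⁻¹)/2)^2) := by
    linear_combination (Real.sin c3 : ℂ)^2 * Complex.I_mul_I -
      (I * (Real.sin c3 : ℂ) + (z - z⁻¹)/2) * gI3
  have h4I : (4:ℂ) * I * (Real.sin c1 : ℂ) * (Real.sin c2 : ℂ) * (Real.sin c3 : ℂ) =
      -4 * ((x - x⁻¹)/2) * ((y - y⁻¹)/2) * ((z - z⁻¹)/2) := by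
    linear_combination (-4*((y - y⁻¹)/2)*((z - z⁻¹)/2)) * gI1 +
      (-4*I*(Real.sin c1 : ℂ)*((z - z⁻¹)/2)) * gI2 +
      (-4*I^2*(Real.sin c1 : ℂ)*(Real.sin c2 : ℂ)) * gI3 +
      (4*I*(Real.sin c1 : ℂ)*(Real.sin c2 : ℂ)*(Real.sin c3 : ℂ)) * Complex.I_mul_I
  constructor
  · rw [htr, htrv, hcos1, hcos2, hcos3]
    rw [show (4:ℂ) * ((x + x⁻¹)/2) * ((y + y⁻¹)/2) * ((z + z⁻¹)/2) +
        4 * I * (Real.sin c1 : ℂ) * (Real.sin c2 : ℂ) * (Real.sin c3 : ℂ) =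
        4 * ((x + x⁻¹)/2) * ((y + y⁻¹)/2) * ((z + z⁻¹)/2) +
        (-4 * ((x - x⁻¹)/2) * ((y - y⁻¹)/2) * ((z - z⁻¹)/2)) by rw [← h4I]]
    ring
  · rw [htr, htr2, htrv, htrv2, hcos1, hcos2, hcos3, hsq1, hsq2, hsq3,
      h2c1, h2c2, h2c3]
    ring

end
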